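/- In any rectilinear drawing with all vertices at distinct points, if two vertices u and v have the same x-coordinate and both u and v are flat vertices whose flat angles face each other horizontally (u's flat angle is north-oriented with v above u and v's flat angle is south-oriented), then u lies in the cell of v and v lies in the cell of u; hence the drawing is not greedy. -/

import Mathlib

open Function

noncomputable section

abbrev Plane := EuclideanSpace ℝ (Fin 2)

def IsGreedy {V : Type*} (G : SimpleGraph V) (p : V → Plane) : Prop :=
  ∀ u v : V, u ≠ v → ∃ (n : ℕ) (c : Fin (n + 1) → V), c 0 = u ∧ c (Fin.last n) = v ∧
    (∀ i : Fin n, G.Adj (c i.castSucc) (c i.succ)) ∧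
    (∀ i : Fin n, dist (p (c i.succ)) (p v) < dist (p (c i.castSucc)) (p v))

def cell {V : Type*} (G : SimpleGraph V) (p : V → Plane) (v : V) : Set Plane :=
  {q | ∀ w : V, G.Adj v w → dist q (p v) < dist q (p w)}

def AxisParallel {V : Type*} (G : SimpleGraph V) (p : V → Plane) : Prop :=
  ∀ u v : V, G.Adj u v → p u 0 = p v 0 ∨ p u 1 = p v 1

/-!
If `u` lies straight below `v` and every neighbor `w` of `v` lies weakly above `v`,
then the angle at `v` between `u` and `w` is at least a right angle, so `|uw| > |uv|`:
`u` is in the cell of `v`. Symmetrically `v` is in the cell of `u`. A greedy path from `v`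
to `u` would have to start with a neighbor of `v` closer to `u` than `v` is, which is
exactly what `u ∈ cell v` forbids.
-/

theorem dist_lt_dist_of_inner_nonneg {E : Type*} [NormedAddCommGroup E] [InnerProductSpace ℝ E]
    {a b c : E} (hbc : b ≠ c) (h : 0 ≤ inner ℝ (a - b) (b - c)) : dist a b < dist a c := by
  rw [dist_eq_norm, dist_eq_norm]
  have hpos : 0 < ‖b - c‖ := norm_pos_iff.2 (sub_ne_zero.2 hbc)
  have hsq : ‖a - b‖ ^ 2 < ‖a - c‖ ^ 2 := by
    rw [show a - c = (a - b) + (b - c) by abel, norm_add_sq_real]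
    nlinarith
  exact lt_of_pow_lt_pow_left₀ 2 (norm_nonneg _) hsq

theorem Plane.inner_eq (x y : Plane) : inner ℝ x y = x 0 * y 0 + x 1 * y 1 := by
  simp [PiLp.inner_apply, Fin.sum_univ_two, mul_comm]

theorem Plane.inner_sub_sub_nonneg_of_vertical {a b c : Plane} (h0 : a 0 = b 0)
    (h1 : 0 ≤ (a 1 - b 1) * (b 1 - c 1)) : 0 ≤ inner ℝ (a - b) (b - c) := by
  simpa [Plane.inner_eq, h0] using h1

section Cell

variable {V : Type*} {G : SimpleGraph V} {p : V → Plane}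

theorem mem_cell_of_inner_nonneg (hp : Injective p) {v : V} {q : Plane}
    (h : ∀ w, G.Adj v w → 0 ≤ inner ℝ (q - p v) (p v - p w)) : q ∈ cell G p v :=
  fun w hw => dist_lt_dist_of_inner_nonneg (hp.ne hw.ne) (h w hw)

theorem not_isGreedy_of_mem_cell {u v : V} (huv : u ≠ v) (hu : p u ∈ cell G p v) :
    ¬ IsGreedy G p := by
  intro hg
  obtain ⟨n, c, hfirst, hlast, hadj, hdist⟩ := hg v u huv.symm
  cases n with
  | zero => exact huv (hlast.symm.trans hfirst)
  | succ m =>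
    have hstep := hdist 0
    have hcell := hu _ (hfirst ▸ hadj 0)
    simp only [Fin.castSucc_zero, hfirst] at hstep
    rw [dist_comm, dist_comm (p u)] at hcell
    exact hstep.not_gt hcell

end Cell

theorem facing_flat_vertices_not_greedy_general {V : Type*}
    (G : SimpleGraph V) (p : V → Plane) (hp : Injective p)
    (u v : V)
    (hx : p u 0 = p v 0) (hy : p u 1 < p v 1)
    (hunorth : ∀ w : V, G.Adj u w → p w 1 ≤ p u 1)
    (hvsouth : ∀ w : V, G.Adj v w → p v 1 ≤ p w 1) :
    p u ∈ cell G p v ∧ p v ∈ cell G p u ∧ ¬ IsGreedy G p := by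
  have huv : u ≠ v := fun h => (h ▸ hy).false
  have hucell : p u ∈ cell G p v := mem_cell_of_inner_nonneg hp fun w hw =>
    Plane.inner_sub_sub_nonneg_of_vertical hx
      (mul_nonneg_of_nonpos_of_nonpos (by linarith) (by linarith [hvsouth w hw]))
  have hvcell : p v ∈ cell G p u := mem_cell_of_inner_nonneg hp fun w hw =>
    Plane.inner_sub_sub_nonneg_of_vertical hx.symm
      (mul_nonneg (by linarith) (by linarith [hunorth w hw]))
  exact ⟨hucell, hvcell, not_isGreedy_of_mem_cell huv hucell⟩

/-- If two vertices `u` (with a north-oriented flat angle) and `v` above it (with a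
south-oriented flat angle) share the same `x`-coordinate, then each lies in the cell
of the other, so the drawing is not greedy. -/
theorem facing_flat_vertices_not_greedy {V : Type*} [Fintype V]
    (G : SimpleGraph V) (p : V → Plane) (hp : Injective p)
    (haxis : AxisParallel G p) (u v : V)
    (hx : p u 0 = p v 0) (hy : p u 1 < p v 1)
    -- `u` is a flat vertex, its flat angle is north-oriented:
    -- two horizontal incident segments and no neighbor strictly above
    (huflat : ∃ wl wr : V, G.Adj u wl ∧ G.Adj u wr ∧
      p wl 1 = p u 1 ∧ p wr 1 = p u 1 ∧ p wl 0 < p u 0 ∧ p u 0 < p wr 0)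
    (hunorth : ∀ w : V, G.Adj u w → p w 1 ≤ p u 1)
    -- `v` is a flat vertex, its flat angle is south-oriented
    (hvflat : ∃ wl wr : V, G.Adj v wl ∧ G.Adj v wr ∧
      p wl 1 = p v 1 ∧ p wr 1 = p v 1 ∧ p wl 0 < p v 0 ∧ p v 0 < p wr 0)
    (hvsouth : ∀ w : V, G.Adj v w → p v 1 ≤ p w 1) :
    p u ∈ cell G p v ∧ p v ∈ cell G p u ∧ ¬ IsGreedy G p :=
  facing_flat_vertices_not_greedy_general G p hp u v hx hy hunorth hvsouth
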